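/- Let (X,d) be a Robinson space that is conical with apex p (d(p,x) = δ > 0 for all x ∈ X \ {p}), with δ < diam(X \ {p}), and let <' be a compatible order of (X \ {p}, d) with minimum x_* and maximum x^*. Then a pair (y,z) of consecutive elements of <' (with y <' z) yields a compatible order of (X,d) when p is inserted between y and z if and only if d(x_*, y) ≤ δ, d(z, x^*) ≤ δ and d(y,z) ≥ δ; moreover, such a pair (y,z) exists. -/

import Mathlib

def IsCompatible {X : Type*} (d : X → X → ℝ) (lt : X → X → Prop) : Prop :=
  ∀ x y z : X, lt x y → lt y z → max (d x y) (d y z) ≤ d x z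

/-- Inserting `p` in the hole just after `y` (before the successor of `y`). -/
def insertOrder {X : Type*} (p : X)
    (lt' : {x : X // x ≠ p} → {x : X // x ≠ p} → Prop)
    (y : {x : X // x ≠ p}) : X → X → Prop :=
  fun u v =>
    (∃ hv : v ≠ p, u = p ∧ lt' y ⟨v, hv⟩) ∨
    (∃ hu : u ≠ p, v = p ∧ ¬ lt' y ⟨u, hu⟩) ∨
    (∃ hu : u ≠ p, ∃ hv : v ≠ p, lt' ⟨u, hu⟩ ⟨v, hv⟩)

/-!
Inserting `p` between consecutive `y ⋖ z` only creates triples through `p`. All distances to `p`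
equal `δ`, so by monotonicity of distances along a compatible order these triples reduce to the
three extreme ones `(x_*, y, p)`, `(p, z, x^*)` and `(y, p, z)`.

For existence, a compatible order of `X` splits `X \ {p}` into the points before and after `p`:
distances are at most `δ` within a side and at least `δ` across. Since
`d(x_*, x^*) = diam(X \ {p}) > δ`, the extremes of `<'` lie on different sides, and the hole is
where `<'` first leaves the side of `x_*`.
-/

section CompatibleOrder

variable {α : Type*} {d : α → α → ℝ}

theorem IsCompatible.apply_le_apply [PartialOrder α] (hc : IsCompatible d (· < ·))
    {a b c e : α} (hab : a ≤ b) (hbc : b < c) (hce : c ≤ e) : d b c ≤ d a e := by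
  have hac : d b c ≤ d a c := by
    rcases hab.lt_or_eq with hab | rfl
    · exact (le_max_right _ _).trans (hc _ _ _ hab hbc)
    · rfl
  have hce' : d a c ≤ d a e := by
    rcases hce.lt_or_eq with hce | rfl
    · exact (le_max_left _ _).trans (hc _ _ _ (hab.trans_lt hbc) hce)
    · rfl
  exact hac.trans hce'

variable [LinearOrder α] {δ : ℝ}

theorem IsCompatible.lt_apply_of_lt_iSup (hc : IsCompatible d (· < ·))
    (hsymm : ∀ x y, d x y = d y x) (hself : ∀ x, d x x = 0) (hδ : 0 ≤ δ)
    {xmin xmax : α} (hbot : ∀ w, xmin ≤ w) (htop : ∀ w, w ≤ xmax)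
    (hdiam : δ < ⨆ u, ⨆ v, d u v) : δ < d xmin xmax := by
  have : Nonempty α := ⟨xmin⟩
  obtain ⟨a, ha⟩ := exists_lt_of_lt_ciSup hdiam
  obtain ⟨b, hab⟩ := exists_lt_of_lt_ciSup ha
  rcases lt_trichotomy a b with h | rfl | h
  · exact hab.trans_le (hc.apply_le_apply (hbot a) h (htop b))
  · linarith [hself a]
  · rw [hsymm] at hab
    exact hab.trans_le (hc.apply_le_apply (hbot b) h (htop a))

variable {p : α}

theorem IsCompatible.apply_le_of_lt_iff_lt (hc : IsCompatible d (· < ·))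
    (hsymm : ∀ x y, d x y = d y x) (hself : ∀ x, d x x = 0) (hδ : 0 ≤ δ)
    (hconical : ∀ x, x ≠ p → d p x = δ) {u v : α} (hu : u ≠ p) (hv : v ≠ p)
    (hside : u < p ↔ v < p) : d u v ≤ δ := by
  wlog huv : u < v generalizing u v
  · rcases (not_lt.mp huv).eq_or_lt with rfl | hvu
    · rw [hself]; exact hδ
    · rw [hsymm]; exact this hv hu hside.symm hvu
  by_cases hvp : v < p
  · calc d u v ≤ d u p := (le_max_left _ _).trans (hc _ _ _ huv hvp)
      _ = δ := by rw [hsymm, hconical u hu]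
  · have hpu : p < u := (not_lt.mp (mt hside.mp hvp)).lt_of_ne hu.symm
    calc d u v ≤ d p v := (le_max_right _ _).trans (hc _ _ _ hpu huv)
      _ = δ := hconical v hv

theorem IsCompatible.le_apply_of_not_lt_iff_lt (hc : IsCompatible d (· < ·))
    (hsymm : ∀ x y, d x y = d y x) (hconical : ∀ x, x ≠ p → d p x = δ) {u v : α}
    (hu : u ≠ p) (hv : v ≠ p) (hside : ¬(u < p ↔ v < p)) : δ ≤ d u v := by
  rcases hu.lt_or_gt with hup | hpu
  · have hpv : p < v := (not_lt.mp fun hvp => hside (iff_of_true hup hvp)).lt_of_ne hv.symm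
    calc δ = d p v := (hconical v hv).symm
      _ ≤ d u v := (le_max_right _ _).trans (hc _ _ _ hup hpv)
  · have hvp : v < p := not_le.mp fun hpv =>
      hside (iff_of_false hpu.not_gt ((hpv.lt_of_ne hv.symm).not_gt))
    calc δ = d p u := (hconical u hu).symm
      _ ≤ d v u := (le_max_right _ _).trans (hc _ _ _ hvp hpu)
      _ = d u v := hsymm v u

end CompatibleOrder

theorem exists_covBy_mem_not_mem {α : Type*} [LinearOrder α] [Finite α] {S : Set α}
    {a b : α} (hab : a ≤ b) (ha : a ∈ S) (hb : b ∉ S) : ∃ y z, y ⋖ z ∧ y ∈ S ∧ z ∉ S := by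
  have hab : a < b := hab.lt_of_ne (by rintro rfl; exact hb ha)
  obtain ⟨y, ⟨hyS, hyb⟩, hymax⟩ :=
    (Set.toFinite {w | w ∈ S ∧ w < b}).exists_maximal ⟨a, ha, hab⟩
  obtain ⟨z, hyz⟩ := exists_covBy_of_wellFoundedLT (not_isMax_iff.mpr ⟨b, hyb⟩)
  refine ⟨y, z, hyz, hyS, fun hzS => ?_⟩
  have hzb : z < b := (hyz.ge_of_gt hyb).lt_of_ne (by rintro rfl; exact hb hzS)
  exact hyz.lt.not_ge (hymax ⟨hzS, hzb⟩ hyz.lt.le)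

section Insertion

variable {X : Type*} {p : X} (r : {x : X // x ≠ p} → {x : X // x ≠ p} → Prop)
  (y u v : {x : X // x ≠ p})

@[simp]
theorem insertOrder_val_val : insertOrder p r y u v ↔ r u v := by
  simp [insertOrder, u.2, v.2]

@[simp]
theorem insertOrder_val_apex : insertOrder p r y u p ↔ ¬r y u := by
  simp [insertOrder, u.2]

@[simp]
theorem insertOrder_apex_val : insertOrder p r y p v ↔ r y v := by
  simp [insertOrder, v.2]

theorem not_insertOrder_apex_apex : ¬insertOrder p r y p p := by
  simp [insertOrder]

end Insertion

section ConicalInsertion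

variable {X : Type*} {d : X → X → ℝ} {p : X} {δ : ℝ} [LinearOrder {x : X // x ≠ p}]

theorem isCompatible_insertOrder (hsymm : ∀ x y, d x y = d y x)
    (hconical : ∀ x, x ≠ p → d p x = δ)
    (hcomp : IsCompatible (fun u v : {x : X // x ≠ p} => d u v) (· < ·))
    {y : {x : X // x ≠ p}}
    (hleft : ∀ u v : {x : X // x ≠ p}, u < v → v ≤ y → d u v ≤ δ)
    (hright : ∀ v w : {x : X // x ≠ p}, y < v → v < w → d v w ≤ δ)
    (hacross : ∀ u w : {x : X // x ≠ p}, u ≤ y → y < w → δ ≤ d u w) :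
    IsCompatible d (insertOrder p (· < ·) y) := by
  have hconical' : ∀ x, x ≠ p → d x p = δ := fun x hx => (hsymm x p).trans (hconical x hx)
  intro a b c hab hbc
  rcases eq_or_ne p a with rfl | ha
  · rcases eq_or_ne p b with rfl | hb
    · exact absurd hab (not_insertOrder_apex_apex _ y)
    lift b to {x : X // x ≠ p} using hb.symm
    rcases eq_or_ne p c with rfl | hc
    · simp only [insertOrder_apex_val, insertOrder_val_apex] at hab hbc
      exact absurd hab hbc
    lift c to {x : X // x ≠ p} using hc.symm
    simp only [insertOrder_apex_val, insertOrder_val_val] at hab hbc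
    rw [hconical b b.2, hconical c c.2]
    exact max_le le_rfl (hright b c hab hbc)
  lift a to {x : X // x ≠ p} using ha.symm
  rcases eq_or_ne p b with rfl | hb
  · rcases eq_or_ne p c with rfl | hc
    · exact absurd hbc (not_insertOrder_apex_apex _ y)
    lift c to {x : X // x ≠ p} using hc.symm
    simp only [insertOrder_val_apex, insertOrder_apex_val, not_lt] at hab hbc
    rw [hconical' a a.2, hconical c c.2, max_self]
    exact hacross a c hab hbc
  lift b to {x : X // x ≠ p} using hb.symm
  rcases eq_or_ne p c with rfl | hc
  · simp only [insertOrder_val_val, insertOrder_val_apex, not_lt] at hab hbc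
    rw [hconical' a a.2, hconical' b b.2]
    exact max_le (hleft a b hab hbc) le_rfl
  lift c to {x : X // x ≠ p} using hc.symm
  simp only [insertOrder_val_val] at hab hbc
  exact hcomp a b c hab hbc

theorem isCompatible_insertOrder_iff (hsymm : ∀ x y, d x y = d y x)
    (hconical : ∀ x, x ≠ p → d p x = δ)
    (hcomp : IsCompatible (fun u v : {x : X // x ≠ p} => d u v) (· < ·))
    (y : {x : X // x ≠ p}) :
    IsCompatible d (insertOrder p (· < ·) y) ↔
      (∀ u v : {x : X // x ≠ p}, u < v → v ≤ y → d u v ≤ δ) ∧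
      (∀ v w : {x : X // x ≠ p}, y < v → v < w → d v w ≤ δ) ∧
      (∀ u w : {x : X // x ≠ p}, u ≤ y → y < w → δ ≤ d u w) := by
  refine ⟨fun hC => ⟨fun u v huv hvy => ?_, fun v w hyv hvw => ?_, fun u w huy hyw => ?_⟩,
    fun ⟨hleft, hright, hacross⟩ =>
      isCompatible_insertOrder hsymm hconical hcomp hleft hright hacross⟩
  · have := hC u v p (by simpa using huv) (by simpa using hvy)
    rw [hsymm u p, hconical u u.2] at this
    exact (le_max_left _ _).trans this
  · have := hC p v w (by simpa using hyv) (by simpa using hvw)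
    rw [hconical w w.2] at this
    exact (le_max_right _ _).trans this
  · have := hC u p w (by simpa using huy) (by simpa using hyw)
    rw [hconical w w.2] at this
    exact (le_max_right _ _).trans this

theorem isCompatible_insertOrder_iff_of_covBy (hsymm : ∀ x y, d x y = d y x)
    (hself : ∀ x, d x x = 0) (hδ : 0 ≤ δ) (hconical : ∀ x, x ≠ p → d p x = δ)
    (hcomp : IsCompatible (fun u v : {x : X // x ≠ p} => d u v) (· < ·))
    {xmin xmax y z : {x : X // x ≠ p}} (hbot : ∀ w, xmin ≤ w) (htop : ∀ w, w ≤ xmax)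
    (hyz : y ⋖ z) :
    IsCompatible d (insertOrder p (· < ·) y) ↔
      d xmin y ≤ δ ∧ d z xmax ≤ δ ∧ δ ≤ d y z := by
  rw [isCompatible_insertOrder_iff hsymm hconical hcomp]
  refine and_congr ⟨fun h => ?_, fun h u v huv hvy => ?_⟩
    (and_congr ⟨fun h => ?_, fun h v w hyv hvw => ?_⟩
      ⟨fun h => h y z le_rfl hyz.lt, fun h u w huy hyw => ?_⟩)
  · rcases (hbot y).lt_or_eq with hlt | heq
    · exact h _ _ hlt le_rfl
    · rw [heq, hself]; exact hδ
  · exact (hcomp.apply_le_apply (hbot u) huv hvy).trans h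
  · rcases (htop z).lt_or_eq with hlt | heq
    · exact h _ _ hyz.lt hlt
    · rw [heq, hself]; exact hδ
  · exact (hcomp.apply_le_apply (hyz.ge_of_gt hyv) hvw (htop w)).trans h
  · exact h.trans (hcomp.apply_le_apply huy hyz.lt (hyz.ge_of_gt hyw))

end ConicalInsertion

theorem admissible_hole_characterization_general {X : Type*} [Fintype X] (d : X → X → ℝ)
    (hsymm : ∀ x y : X, d x y = d y x)
    (hself : ∀ x : X, d x x = 0)
    (hRobinson : ∃ lt : X → X → Prop, IsStrictTotalOrder X lt ∧ IsCompatible d lt)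
    (p : X) (δ : ℝ) (hδpos : 0 < δ)
    (hconical : ∀ x : X, x ≠ p → d p x = δ)
    (hδdiam : δ < ⨆ u : {x : X // x ≠ p}, ⨆ v : {x : X // x ≠ p}, d u.1 v.1)
    (lt' : {x : X // x ≠ p} → {x : X // x ≠ p} → Prop)
    (hsto : IsStrictTotalOrder {x : X // x ≠ p} lt')
    (hcomp : ∀ u v w : {x : X // x ≠ p}, lt' u v → lt' v w →
      max (d u.1 v.1) (d v.1 w.1) ≤ d u.1 w.1)
    (xmin xmax : {x : X // x ≠ p})
    (hmin : ∀ w : {x : X // x ≠ p}, ¬ lt' w xmin)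
    (hmax : ∀ w : {x : X // x ≠ p}, ¬ lt' xmax w) :
    (∀ y z : {x : X // x ≠ p}, lt' y z →
      (∀ w : {x : X // x ≠ p}, ¬ (lt' y w ∧ lt' w z)) →
      (IsCompatible d (insertOrder p lt' y) ↔
        d xmin.1 y.1 ≤ δ ∧ d z.1 xmax.1 ≤ δ ∧ δ ≤ d y.1 z.1)) ∧
    (∃ y z : {x : X // x ≠ p}, lt' y z ∧
      (∀ w : {x : X // x ≠ p}, ¬ (lt' y w ∧ lt' w z)) ∧
      d xmin.1 y.1 ≤ δ ∧ d z.1 xmax.1 ≤ δ ∧ δ ≤ d y.1 z.1) := by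
  classical
  obtain ⟨lt, hlt, hRobinson⟩ := hRobinson
  have hsame : ∀ u v : {x : X // x ≠ p}, (lt u p ↔ lt v p) → d u v ≤ δ := by
    let := linearOrderOfSTO lt
    exact fun u v => hRobinson.apply_le_of_lt_iff_lt hsymm hself hδpos.le hconical u.2 v.2
  have hcross : ∀ u v : {x : X // x ≠ p}, ¬(lt u p ↔ lt v p) → δ ≤ d u v := by
    let := linearOrderOfSTO lt
    exact fun u v => hRobinson.le_apply_of_not_lt_iff_lt hsymm hconical u.2 v.2
  let : LinearOrder {x : X // x ≠ p} := linearOrderOfSTO lt'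
  have hcomp : IsCompatible (fun u v : {x : X // x ≠ p} => d u v) (· < ·) := hcomp
  have hbot : ∀ w, xmin ≤ w := fun w => not_lt.mp (hmin w)
  have htop : ∀ w, w ≤ xmax := fun w => not_lt.mp (hmax w)
  refine ⟨fun y z hyz hcons => isCompatible_insertOrder_iff_of_covBy hsymm hself hδpos.le
    hconical hcomp hbot htop ⟨hyz, fun w hyw hwz => hcons w ⟨hyw, hwz⟩⟩, ?_⟩
  have hextremes : ¬(lt xmin p ↔ lt xmax p) := fun h =>
    (hcomp.lt_apply_of_lt_iSup (fun u v => hsymm u v) (fun u => hself u) hδpos.le hbot htop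
      hδdiam).not_ge (hsame xmin xmax h)
  obtain ⟨y, z, hyz, hy, hz⟩ := exists_covBy_mem_not_mem
    (S := {w : {x : X // x ≠ p} | lt w p ↔ lt xmin p})
    (hbot xmax) Iff.rfl (fun h => hextremes h.symm)
  rw [Set.mem_ofPred_eq] at hy hz
  exact ⟨y, z, hyz.lt, fun w hw => hyz.2 hw.1 hw.2, hsame xmin y hy.symm,
    hsame z xmax (by tauto), hcross y z (by tauto)⟩

/-- in a Robinson space which is conical with apex `p` and
`δ < diam(X \ {p})`, given a compatible order `<'` of `X \ {p}` with minimum `x_*`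
and maximum `x^*`, a consecutive pair `(y,z)` of `<'` gives a compatible order of
`(X,d)` after inserting `p` iff `d(x_*,y) ≤ δ`, `d(z,x^*) ≤ δ` and `d(y,z) ≥ δ`;
moreover such a pair exists. -/
theorem admissible_hole_characterization {X : Type*} [Fintype X] (d : X → X → ℝ)
    (hsymm : ∀ x y : X, d x y = d y x)
    (hnonneg : ∀ x y : X, 0 ≤ d x y)
    (hself : ∀ x : X, d x x = 0)
    (hRobinson : ∃ lt : X → X → Prop, IsStrictTotalOrder X lt ∧ IsCompatible d lt)
    (p : X) (δ : ℝ) (hδpos : 0 < δ)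
    (hconical : ∀ x : X, x ≠ p → d p x = δ)
    (hδdiam : δ < ⨆ u : {x : X // x ≠ p}, ⨆ v : {x : X // x ≠ p}, d u.1 v.1)
    (lt' : {x : X // x ≠ p} → {x : X // x ≠ p} → Prop)
    (hsto : IsStrictTotalOrder {x : X // x ≠ p} lt')
    (hcomp : ∀ u v w : {x : X // x ≠ p}, lt' u v → lt' v w →
      max (d u.1 v.1) (d v.1 w.1) ≤ d u.1 w.1)
    (xmin xmax : {x : X // x ≠ p})
    (hmin : ∀ w : {x : X // x ≠ p}, ¬ lt' w xmin)
    (hmax : ∀ w : {x : X // x ≠ p}, ¬ lt' xmax w) :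
    (∀ y z : {x : X // x ≠ p}, lt' y z →
      (∀ w : {x : X // x ≠ p}, ¬ (lt' y w ∧ lt' w z)) →
      (IsCompatible d (insertOrder p lt' y) ↔
        d xmin.1 y.1 ≤ δ ∧ d z.1 xmax.1 ≤ δ ∧ δ ≤ d y.1 z.1)) ∧
    (∃ y z : {x : X // x ≠ p}, lt' y z ∧
      (∀ w : {x : X // x ≠ p}, ¬ (lt' y w ∧ lt' w z)) ∧
      d xmin.1 y.1 ≤ δ ∧ d z.1 xmax.1 ≤ δ ∧ δ ≤ d y.1 z.1) :=
  admissible_hole_characterization_general d hsymm hself hRobinson p δ hδpos hconical hδdiam lt'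
    hsto hcomp xmin xmax hmin hmax
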